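/- arXiv:1604.05422 — 4 statements merged into one kernel-verified Lean document; each statement's English description precedes it below -/
import Mathlib

section
/- If a torsion-free affine connection ∇ on a manifold M is affine Szabó at p (every affine Szabó operator S(X), X ∈ T_pM, is nilpotent), then the Ricci tensor of ∇ satisfies the cyclic parallel condition (∇_X Ric)(X,X) = 0 for all X ∈ T_pM. -/
open scoped BigOperators

noncomputable section AffineSzabo

variable {ι : Type} [Fintype ι] [DecidableEq ι]

/-- Points of the coordinate chart. -/
abbrev Pt (ι : Type) := ι → ℝ
/-- Vector fields in coordinates. -/
abbrev VF (ι : Type) := Pt ι → Pt ι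
/-- Christoffel symbols `Γ p i j k = Γ^i_{jk}(p)` of a torsion-free affine connection. -/
abbrev Chr (ι : Type) := Pt ι → ι → ι → ι → ℝ

/-- Partial derivative in the `j`-th coordinate direction. -/
def pd (j : ι) (f : Pt ι → ℝ) (p : Pt ι) : ℝ :=
  fderiv ℝ f p (Pi.single j 1)

/-- The covariant derivative `∇_X Y` of the affine connection with Christoffel symbols `Γ`. -/
def conn (Γ : Chr ι) (X Y : VF ι) : VF ι :=
  fun p i => fderiv ℝ (fun q => Y q i) p (X p) + ∑ j, ∑ k, Γ p i j k * X p j * Y p k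

/-- The Lie bracket of vector fields. -/
def bracket (X Y : VF ι) : VF ι :=
  fun p i => fderiv ℝ (fun q => Y q i) p (X p) - fderiv ℝ (fun q => X q i) p (Y p)

/-- The curvature tensor `R(X,Y)Z = ∇_X∇_Y Z − ∇_Y∇_X Z − ∇_{[X,Y]}Z`. -/
def curv (Γ : Chr ι) (X Y Z : VF ι) : VF ι :=
  conn Γ X (conn Γ Y Z) - conn Γ Y (conn Γ X Z) - conn Γ (bracket X Y) Z

/-- The covariant derivative of the curvature tensor,
`(∇_X R)(Y,Z)W = ∇_X(R(Y,Z)W) − R(∇_X Y,Z)W − R(Y,∇_X Z)W − R(Y,Z)∇_X W`. -/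
def covCurv (Γ : Chr ι) (X Y Z W : VF ι) : VF ι :=
  conn Γ X (curv Γ Y Z W) - curv Γ (conn Γ X Y) Z W - curv Γ Y (conn Γ X Z) W
    - curv Γ Y Z (conn Γ X W)

/-- The affine Szabó operator `S(X)Y = (∇_X R)(Y,X)X`. -/
def szabo (Γ : Chr ι) (X Y : VF ι) : VF ι := covCurv Γ X Y X X

/-- The constant vector field extending a tangent vector `v`. -/
def cvf (v : Pt ι) : VF ι := fun _ => v

/-- The matrix of the affine Szabó operator `S(X)` at the point `p` with respect to the
tangent vector `X = v`, in the coordinate basis. -/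
def szaboMat (Γ : Chr ι) (p v : Pt ι) : Matrix ι ι ℝ :=
  Matrix.of fun i m => szabo Γ (cvf v) (cvf (Pi.single m 1)) p i

/-- The Ricci tensor `Ric(X,Y) = trace (Z ↦ R(Z,X)Y)`. -/
def ricci (Γ : Chr ι) (X Y : VF ι) (p : Pt ι) : ℝ :=
  ∑ i, curv Γ (cvf (Pi.single i 1)) X Y p i

/-- The covariant derivative of the Ricci tensor,
`(∇_X Ric)(Z,W) = X(Ric(Z,W)) − Ric(∇_X Z,W) − Ric(Z,∇_X W)`. -/
def covRic (Γ : Chr ι) (X Z W : VF ι) (p : Pt ι) : ℝ :=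
  fderiv ℝ (ricci Γ Z W) p (X p) - ricci Γ (conn Γ X Z) W p - ricci Γ Z (conn Γ X W) p

/-- A vector field is smooth if its components are smooth. -/
def SmoothVF (X : VF ι) : Prop := ∀ i, ContDiff ℝ (⊤ : ℕ∞) fun p => X p i

/-- A connection is smooth if its Christoffel symbols are smooth. -/
def SmoothChr (Γ : Chr ι) : Prop := ∀ i j k, ContDiff ℝ (⊤ : ℕ∞) fun p => Γ p i j k

/-- The Ricci tensor of `Γ` is cyclic parallel: `(∇_X Ric)(X,X) = 0` for all vector fields `X`. -/
def CyclicParallelRic (Γ : Chr ι) : Prop :=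
  ∀ X : VF ι, SmoothVF X → ∀ p, covRic Γ X X X p = 0

/-- The connection is affine Szabó: every affine Szabó operator is nilpotent. -/
def AffineSzabo (Γ : Chr ι) : Prop :=
  ∀ p v : Pt ι, IsNilpotent (szaboMat Γ p v)



set_option maxHeartbeats 1000000
set_option linter.unusedSectionVars false

section AuxLemmas

lemma contDiff_fderiv_apply {f : Pt ι → ℝ} (hf : ContDiff ℝ (⊤ : ℕ∞) f) (u : Pt ι) :
    ContDiff ℝ (⊤ : ℕ∞) fun q => fderiv ℝ f q u :=
  (hf.fderiv_right (by simp)).clm_apply contDiff_const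

lemma dsum (f : ι → Pt ι → ℝ) {q : Pt ι} (h : ∀ j, DifferentiableAt ℝ (f j) q) (u : Pt ι) :
    fderiv ℝ (fun q' => ∑ j, f j q') q u = ∑ j, fderiv ℝ (f j) q u := by
  rw [fderiv_fun_sum (fun j _ => h j)]
  simp

lemma dmul {f g : Pt ι → ℝ} {q : Pt ι} (hf : DifferentiableAt ℝ f q)
    (hg : DifferentiableAt ℝ g q) (u : Pt ι) :
    fderiv ℝ (fun q' => f q' * g q') q u = f q * fderiv ℝ g q u + fderiv ℝ f q u * g q := by
  rw [fderiv_fun_mul hf hg]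
  simp [smul_eq_mul]
  ring

lemma dmul_const {f : Pt ι → ℝ} {q : Pt ι} (hf : DifferentiableAt ℝ f q) (c : ℝ) (u : Pt ι) :
    fderiv ℝ (fun q' => f q' * c) q u = fderiv ℝ f q u * c := by
  rw [fderiv_mul_const hf]
  simp [smul_eq_mul]
  ring

lemma dlin (f : Pt ι → ℝ) (q u : Pt ι) :
    fderiv ℝ f q u = ∑ s, u s * fderiv ℝ f q (Pi.single s 1) := by
  have hu : u = ∑ s, u s • (Pi.single s 1 : Pt ι) := by
    ext j
    simp [Pi.single_apply]
  conv_lhs => rw [hu]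
  rw [map_sum]
  simp [smul_eq_mul]

def cc (Γ : Chr ι) (u w : Pt ι) : VF ι := fun q i => ∑ j, ∑ k, Γ q i j k * u j * w k

lemma cc_contDiff {Γ : Chr ι} (hΓ : SmoothChr Γ) (u w : Pt ι) (i : ι) :
    ContDiff ℝ (⊤ : ℕ∞) fun q => cc Γ u w q i := by
  unfold cc
  exact ContDiff.sum fun j _ => ContDiff.sum fun k _ =>
    (((hΓ i j k).mul contDiff_const).mul contDiff_const)

lemma conn_cvf_cvf (Γ : Chr ι) (u w : Pt ι) : conn Γ (cvf u) (cvf w) = cc Γ u w := by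
  funext q i
  simp [conn, cvf, cc]

lemma conn_cvf_apply (Γ : Chr ι) (u : Pt ι) (Z : VF ι) (q : Pt ι) (i : ι) :
    conn Γ (cvf u) Z q i
      = fderiv ℝ (fun q' => Z q' i) q u + ∑ j, ∑ k, Γ q i j k * u j * Z q k := rfl

lemma bracket_cvf (u w : Pt ι) : bracket (cvf u) (cvf w) = fun _ _ => (0:ℝ) := by
  funext q i
  simp [bracket, cvf]

lemma conn_zero (Γ : Chr ι) (W : VF ι) : conn Γ (fun _ _ => (0:ℝ)) W = fun _ _ => (0:ℝ) := by
  funext q i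
  show fderiv ℝ (fun q' => W q' i) q (fun _ => (0:ℝ)) + ∑ j, ∑ k, Γ q i j k * 0 * W q k = 0
  have h0 : (fun _ => (0:ℝ)) = (0 : Pt ι) := rfl
  simp [h0]

lemma curv_ccc (Γ : Chr ι) (u t w : Pt ι) (q : Pt ι) (i : ι) :
    curv Γ (cvf u) (cvf t) (cvf w) q i =
      (fderiv ℝ (fun q' => cc Γ t w q' i) q u + ∑ j, ∑ k, Γ q i j k * u j * cc Γ t w q k)
      - (fderiv ℝ (fun q' => cc Γ u w q' i) q t + ∑ j, ∑ k, Γ q i j k * t j * cc Γ u w q k) := by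
  unfold curv
  rw [conn_cvf_cvf, conn_cvf_cvf, bracket_cvf, conn_zero]
  simp [conn_cvf_apply]

lemma fderiv_cc_apply {Γ : Chr ι} (hΓ : SmoothChr Γ) (u w : Pt ι) (i : ι) (q d : Pt ι) :
    fderiv ℝ (fun q' => cc Γ u w q' i) q d
      = ∑ j, ∑ k, fderiv ℝ (fun q' => Γ q' i j k) q d * u j * w k := by
  unfold cc
  rw [dsum]
  · refine Finset.sum_congr rfl fun j _ => ?_
    rw [dsum]
    · exact Finset.sum_congr rfl fun k _ => by
        rw [show (fun q' => Γ q' i j k * u j * w k) = (fun q' => Γ q' i j k * (u j * w k)) by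
              funext q'; ring]
        rw [dmul_const ((hΓ i j k).differentiable (by simp)).differentiableAt]
        ring
    · exact fun k => (((hΓ i j k).mul contDiff_const).mul
        contDiff_const).differentiable (by simp) |>.differentiableAt
  · intro j
    exact (ContDiff.sum fun k _ => ((hΓ i j k).mul contDiff_const).mul
      contDiff_const).differentiable (by simp) |>.differentiableAt


lemma gdiff (hΓ : SmoothChr Γ) (i j k : ι) (q : Pt ι) : DifferentiableAt ℝ (fun q' => Γ q' i j k) q :=
  ((hΓ i j k).differentiable (by simp)).differentiableAt

lemma cc_diff (hΓ : SmoothChr Γ) (u w : Pt ι) (i : ι) (q : Pt ι) :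
    DifferentiableAt ℝ (fun q' => cc Γ u w q' i) q :=
  ((cc_contDiff hΓ u w i).differentiable (by simp)).differentiableAt

lemma Fform (hΓ : SmoothChr Γ) (p v : Pt ι) (m k : ι) :
    curv Γ (cvf (Pi.single m 1)) (cvf v) (cvf v) p k =
      (∑ a, ∑ b, fderiv ℝ (fun q => Γ q k a b) p (Pi.single m 1) * v a * v b)
      + (∑ c, ∑ l, Γ p k c l * (Pi.single m 1 : Pt ι) c * cc Γ v v p l)
      - (∑ a, ∑ b, fderiv ℝ (fun q => Γ q k a b) p v * (Pi.single m 1 : Pt ι) a * v b)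
      - (∑ c, ∑ l, Γ p k c l * v c * cc Γ (Pi.single m 1) v p l) := by
  rw [curv_ccc, fderiv_cc_apply hΓ, fderiv_cc_apply hΓ]
  ring

lemma F_contDiff (hΓ : SmoothChr Γ) (v : Pt ι) (m i : ι) :
    ContDiff ℝ (⊤ : ℕ∞) (fun q => curv Γ (cvf (Pi.single m 1)) (cvf v) (cvf v) q i) := by
  have h : (fun q => curv Γ (cvf (Pi.single m 1)) (cvf v) (cvf v) q i)
      = fun q => (fderiv ℝ (fun q' => cc Γ v v q' i) q (Pi.single m 1)
          + ∑ j, ∑ k, Γ q i j k * (Pi.single m 1 : Pt ι) j * cc Γ v v q k)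
        - (fderiv ℝ (fun q' => cc Γ (Pi.single m 1) v q' i) q v
          + ∑ j, ∑ k, Γ q i j k * v j * cc Γ (Pi.single m 1) v q k) :=
    funext fun q => curv_ccc Γ (Pi.single m 1) v v q i
  rw [h]
  refine ContDiff.sub (ContDiff.add ?_ ?_) (ContDiff.add ?_ ?_)
  · exact contDiff_fderiv_apply (cc_contDiff hΓ v v i) _
  · exact ContDiff.sum fun j _ => ContDiff.sum fun k _ =>
      (((hΓ i j k).mul contDiff_const).mul (cc_contDiff hΓ v v k))
  · exact contDiff_fderiv_apply (cc_contDiff hΓ (Pi.single m 1) v i) _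
  · exact ContDiff.sum fun j _ => ContDiff.sum fun k _ =>
      (((hΓ i j k).mul contDiff_const).mul (cc_contDiff hΓ (Pi.single m 1) v k))

lemma T2form (hΓ : SmoothChr Γ) (p v : Pt ι) (m : ι) :
    curv Γ (cc Γ v (Pi.single m 1)) (cvf v) (cvf v) p m =
      (∑ a, ∑ b, (∑ s, cc Γ v (Pi.single m 1) p s
          * fderiv ℝ (fun q => Γ q m a b) p (Pi.single s 1)) * v a * v b)
      + (∑ j, ∑ k, Γ p m j k * cc Γ v (Pi.single m 1) p j * cc Γ v v p k)
      - (∑ j, ∑ k, fderiv ℝ (fun q => Γ q m j k) p v * cc Γ v (Pi.single m 1) p j * v k)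
      - (∑ j, ∑ k, Γ p m j k * v j
          * (∑ a, ∑ b, Γ p k a b * cc Γ v (Pi.single m 1) p a * v b)) := by
  set A : VF ι := cc Γ v (Pi.single m 1) with hA
  -- Term 1
  have h1 : conn Γ A (conn Γ (cvf v) (cvf v)) p m
      = (∑ a, ∑ b, (∑ s, A p s * fderiv ℝ (fun q => Γ q m a b) p (Pi.single s 1)) * v a * v b)
        + ∑ j, ∑ k, Γ p m j k * A p j * cc Γ v v p k := by
    rw [conn_cvf_cvf]
    show fderiv ℝ (fun q => cc Γ v v q m) p (A p) + _ = _
    rw [fderiv_cc_apply hΓ]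
    congr 1
    refine Finset.sum_congr rfl fun a _ => Finset.sum_congr rfl fun b _ => ?_
    rw [dlin (fun q => Γ q m a b) p (A p)]
  -- Term 2
  have hAX : conn Γ A (cvf v) = fun q i => ∑ j, ∑ k, Γ q i j k * A q j * v k := by
    funext q i
    simp [conn, cvf]
  have h2 : conn Γ (cvf v) (conn Γ A (cvf v)) p m
      = ((∑ j, ∑ k, Γ p m j k * fderiv ℝ (fun q' => A q' j) p v * v k)
          + ∑ j, ∑ k, fderiv ℝ (fun q => Γ q m j k) p v * A p j * v k)
        + ∑ j, ∑ k, Γ p m j k * v j * (∑ a, ∑ b, Γ p k a b * A p a * v b) := by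
    rw [hAX, conn_cvf_apply]
    congr 1
    · rw [dsum]
      · rw [← Finset.sum_add_distrib]
        refine Finset.sum_congr rfl fun j _ => ?_
        rw [dsum]
        · rw [← Finset.sum_add_distrib]
          refine Finset.sum_congr rfl fun k _ => ?_
          rw [dmul_const ((gdiff hΓ m j k p).fun_mul (cc_diff hΓ v (Pi.single m 1) j p))]
          rw [dmul (gdiff hΓ m j k p) (cc_diff hΓ v (Pi.single m 1) j p)]
          ring
        · exact fun k => (((gdiff hΓ m j k p).fun_mul (cc_diff hΓ v (Pi.single m 1) j p)).fun_mul
            (differentiableAt_const _))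
      · intro j
        exact DifferentiableAt.fun_sum fun k _ =>
          (((gdiff hΓ m j k p).fun_mul (cc_diff hΓ v (Pi.single m 1) j p)).fun_mul
            (differentiableAt_const _))
  -- Term 3
  have hbr : bracket A (cvf v) = fun q i => -(fderiv ℝ (fun q' => A q' i) q v) := by
    funext q i
    simp [bracket, cvf]
  have h3 : conn Γ (bracket A (cvf v)) (cvf v) p m
      = -(∑ j, ∑ k, Γ p m j k * fderiv ℝ (fun q' => A q' j) p v * v k) := by
    rw [hbr]
    show fderiv ℝ (fun q => v m) p _ + ∑ j, ∑ k, Γ p m j k * -(fderiv ℝ (fun q' => A q' j) p v) * v k = _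
    simp [mul_neg, neg_mul, Finset.sum_neg_distrib]
  show (conn Γ A (conn Γ (cvf v) (cvf v)) - conn Γ (cvf v) (conn Γ A (cvf v))
      - conn Γ (bracket A (cvf v)) (cvf v)) p m = _
  simp only [Pi.sub_apply]
  rw [h1, h2, h3]
  ring


lemma sumc {f g : ι → ℝ} (h : ∀ a, f a = g a) : ∑ a, f a = ∑ a, g a :=
  Finset.sum_congr rfl fun a _ => h a

lemma front3 (f : ι → ι → ι → ℝ) :
    ∑ a, ∑ b, ∑ c, f a b c = ∑ c, ∑ a, ∑ b, f a b c := by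
  calc ∑ a, ∑ b, ∑ c, f a b c = ∑ a, ∑ c, ∑ b, f a b c :=
        sumc fun a => Finset.sum_comm
    _ = ∑ c, ∑ a, ∑ b, f a b c := Finset.sum_comm

lemma front4 (f : ι → ι → ι → ι → ℝ) :
    ∑ a, ∑ b, ∑ c, ∑ d, f a b c d = ∑ d, ∑ a, ∑ b, ∑ c, f a b c d := by
  calc ∑ a, ∑ b, ∑ c, ∑ d, f a b c d = ∑ a, ∑ d, ∑ b, ∑ c, f a b c d :=
        sumc fun a => front3 (f a)
    _ = ∑ d, ∑ a, ∑ b, ∑ c, f a b c d := Finset.sum_comm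

lemma front5 (f : ι → ι → ι → ι → ι → ℝ) :
    ∑ a, ∑ b, ∑ c, ∑ d, ∑ e, f a b c d e = ∑ e, ∑ a, ∑ b, ∑ c, ∑ d, f a b c d e := by
  calc ∑ a, ∑ b, ∑ c, ∑ d, ∑ e, f a b c d e = ∑ a, ∑ e, ∑ b, ∑ c, ∑ d, f a b c d e :=
        sumc fun a => front4 (f a)
    _ = ∑ e, ∑ a, ∑ b, ∑ c, ∑ d, f a b c d e := Finset.sum_comm

lemma perm4 (f : ι → ι → ι → ι → ℝ) :
    ∑ a, ∑ b, ∑ c, ∑ d, f a b c d = ∑ b, ∑ d, ∑ a, ∑ c, f a b c d := by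
  calc ∑ a, ∑ b, ∑ c, ∑ d, f a b c d = ∑ b, ∑ a, ∑ c, ∑ d, f a b c d := Finset.sum_comm
    _ = ∑ b, ∑ d, ∑ a, ∑ c, f a b c d := sumc fun b => front3 fun a c d => f a b c d

lemma perm5 (f : ι → ι → ι → ι → ι → ℝ) :
    ∑ a, ∑ b, ∑ c, ∑ d, ∑ e, f a b c d e = ∑ d, ∑ e, ∑ a, ∑ b, ∑ c, f a b c d e := by
  calc ∑ a, ∑ b, ∑ c, ∑ d, ∑ e, f a b c d e
      = ∑ d, ∑ a, ∑ b, ∑ c, ∑ e, f a b c d e := front4 fun a b c d => ∑ e, f a b c d e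
    _ = ∑ d, ∑ e, ∑ a, ∑ b, ∑ c, f a b c d e :=
        sumc fun d => front4 fun a b c e => f a b c d e

lemma perm6 (f : ι → ι → ι → ι → ι → ι → ℝ) :
    ∑ a, ∑ b, ∑ c, ∑ d, ∑ e, ∑ g, f a b c d e g
      = ∑ d, ∑ g, ∑ a, ∑ b, ∑ c, ∑ e, f a b c d e g := by
  calc ∑ a, ∑ b, ∑ c, ∑ d, ∑ e, ∑ g, f a b c d e g
      = ∑ d, ∑ a, ∑ b, ∑ c, ∑ e, ∑ g, f a b c d e g :=
        front4 fun a b c d => ∑ e, ∑ g, f a b c d e g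
    _ = ∑ d, ∑ g, ∑ a, ∑ b, ∑ c, ∑ e, f a b c d e g :=
        sumc fun d => front5 fun a b c e g => f a b c d e g

lemma congr4 {f g : ι → ι → ι → ι → ℝ} (h : ∀ a b c d, f a b c d = g a b c d) :
    ∑ a, ∑ b, ∑ c, ∑ d, f a b c d = ∑ a, ∑ b, ∑ c, ∑ d, g a b c d :=
  sumc fun a => sumc fun b => sumc fun c => sumc fun d => h a b c d

lemma congr5 {f g : ι → ι → ι → ι → ι → ℝ} (h : ∀ a b c d e, f a b c d e = g a b c d e) :
    ∑ a, ∑ b, ∑ c, ∑ d, ∑ e, f a b c d e = ∑ a, ∑ b, ∑ c, ∑ d, ∑ e, g a b c d e :=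
  sumc fun a => congr4 (h a)

lemma congr6 {f g : ι → ι → ι → ι → ι → ι → ℝ}
    (h : ∀ a b c d e x, f a b c d e x = g a b c d e x) :
    ∑ a, ∑ b, ∑ c, ∑ d, ∑ e, ∑ x, f a b c d e x
      = ∑ a, ∑ b, ∑ c, ∑ d, ∑ e, ∑ x, g a b c d e x :=
  sumc fun a => congr5 (h a)

lemma cc_single_right (p u : Pt ι) (m s : ι) :
    cc Γ u (Pi.single m 1) p s = ∑ c, Γ p s c m * u c := by
  unfold cc
  refine Finset.sum_congr rfl fun c _ => ?_
  simp [Pi.single_apply, mul_ite]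

lemma cc_single_left (p w : Pt ι) (m l : ι) :
    cc Γ (Pi.single m 1) w p l = ∑ b, Γ p l m b * w b := by
  unfold cc
  simp [Pi.single_apply, ite_mul, mul_ite]

lemma star (hΓ : SmoothChr Γ) (p v : Pt ι) :
    ∑ m, ∑ j, ∑ k, Γ p m j k * v j * curv Γ (cvf (Pi.single m 1)) (cvf v) (cvf v) p k
      = ∑ m, curv Γ (cc Γ v (Pi.single m 1)) (cvf v) (cvf v) p m := by
  simp only [Fform hΓ p v, T2form hΓ p v, cc_single_right, cc_single_left,
    Pi.single_apply, mul_ite, ite_mul, mul_one, mul_zero, zero_mul, one_mul,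
    Finset.sum_ite_eq', Finset.mem_univ, if_true]
  simp only [mul_add, mul_sub, add_mul, sub_mul, Finset.mul_sum, Finset.sum_mul,
    Finset.sum_add_distrib, Finset.sum_sub_distrib, Pi.single_apply, mul_ite, ite_mul,
    mul_one, mul_zero, zero_mul, one_mul, Finset.sum_ite_irrel, Finset.sum_const_zero,
    Finset.sum_ite_eq', Finset.mem_univ, if_true]
  have e1 : (∑ m, ∑ a, ∑ b, ∑ s, ∑ c,
        Γ p s c m * v c * fderiv ℝ (fun q => Γ q m a b) p (Pi.single s 1) * v a * v b)
      = ∑ m, ∑ j, ∑ k, ∑ a, ∑ b,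
        Γ p m j k * v j * (fderiv ℝ (fun q => Γ q k a b) p (Pi.single m 1) * v a * v b) :=
    (perm5 fun m a b s c =>
        Γ p s c m * v c * fderiv ℝ (fun q => Γ q m a b) p (Pi.single s 1) * v a * v b).trans
      (congr5 fun o1 o2 o3 o4 o5 => by ring)
  have e2 : (∑ m, ∑ j, ∑ k, ∑ c, Γ p m j k * (Γ p j c m * v c) * cc Γ v v p k)
      = ∑ m, ∑ j, ∑ k, ∑ l, Γ p m j k * v j * (Γ p k m l * cc Γ v v p l) :=
    (perm4 fun m j k c => Γ p m j k * (Γ p j c m * v c) * cc Γ v v p k).trans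
      (congr4 fun o1 o2 o3 o4 => by ring)
  have e3 : (∑ m, ∑ j, ∑ k, ∑ c,
        fderiv ℝ (fun q => Γ q m j k) p v * (Γ p j c m * v c) * v k)
      = ∑ m, ∑ j, ∑ k, ∑ b, Γ p m j k * v j * (fderiv ℝ (fun q => Γ q k m b) p v * v b) :=
    (perm4 fun m j k c => fderiv ℝ (fun q => Γ q m j k) p v * (Γ p j c m * v c) * v k).trans
      (congr4 fun o1 o2 o3 o4 => by ring)
  have e4 : (∑ m, ∑ j, ∑ k, ∑ a, ∑ l, ∑ c,
        Γ p m j k * v j * (Γ p k a l * (Γ p a c m * v c) * v l))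
      = ∑ m, ∑ j, ∑ k, ∑ c, ∑ l, ∑ b,
        Γ p m j k * v j * (Γ p k c l * v c * (Γ p l m b * v b)) :=
    (perm6 fun m j k a l c => Γ p m j k * v j * (Γ p k a l * (Γ p a c m * v c) * v l)).trans
      (congr6 fun o1 o2 o3 o4 o5 o6 => by ring)
  rw [e1, e2, e3, e4]


end AuxLemmas

/-- If `(M,∇)` is affine Szabó at `p` (every Szabó operator at `p` is nilpotent), then the
Ricci tensor satisfies `(∇_X Ric)(X,X) = 0` for every tangent vector `X` at `p`. -/
theorem cyclicParallel_of_affineSzabo_at {ι : Type} [Fintype ι] [DecidableEq ι]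
    (Γ : Chr ι) (hΓ : SmoothChr Γ) (p : Pt ι)
    (h : ∀ v : Pt ι, IsNilpotent (szaboMat Γ p v)) :
    ∀ v : Pt ι, covRic Γ (cvf v) (cvf v) (cvf v) p = 0 := by
  intro v
  have htr : Matrix.trace (szaboMat Γ p v) = 0 :=
    (Matrix.isNilpotent_trace_of_isNilpotent (h v)).eq_zero
  have htrace_eq : Matrix.trace (szaboMat Γ p v)
      = ∑ m, szabo Γ (cvf v) (cvf (Pi.single m 1)) p m := by
    simp [Matrix.trace, Matrix.diag, szaboMat]
  have hszabo : ∀ m : ι, szabo Γ (cvf v) (cvf (Pi.single m 1)) p m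
      = (fderiv ℝ (fun q => curv Γ (cvf (Pi.single m 1)) (cvf v) (cvf v) q m) p v
          + ∑ j, ∑ k, Γ p m j k * v j * curv Γ (cvf (Pi.single m 1)) (cvf v) (cvf v) p k)
        - curv Γ (cc Γ v (Pi.single m 1)) (cvf v) (cvf v) p m
        - curv Γ (cvf (Pi.single m 1)) (cc Γ v v) (cvf v) p m
        - curv Γ (cvf (Pi.single m 1)) (cvf v) (cc Γ v v) p m := by
    intro m
    have : szabo Γ (cvf v) (cvf (Pi.single m 1)) p m
        = conn Γ (cvf v) (curv Γ (cvf (Pi.single m 1)) (cvf v) (cvf v)) p m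
          - curv Γ (cc Γ v (Pi.single m 1)) (cvf v) (cvf v) p m
          - curv Γ (cvf (Pi.single m 1)) (cc Γ v v) (cvf v) p m
          - curv Γ (cvf (Pi.single m 1)) (cvf v) (cc Γ v v) p m := by
      simp only [szabo, covCurv, conn_cvf_cvf, Pi.sub_apply]
    rw [this, conn_cvf_apply]
  have hcovRic : covRic Γ (cvf v) (cvf v) (cvf v) p
      = fderiv ℝ (fun q => ∑ i, curv Γ (cvf (Pi.single i 1)) (cvf v) (cvf v) q i) p v
        - ∑ i, curv Γ (cvf (Pi.single i 1)) (cc Γ v v) (cvf v) p i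
        - ∑ i, curv Γ (cvf (Pi.single i 1)) (cvf v) (cc Γ v v) p i := by
    simp only [covRic, ricci, conn_cvf_cvf]
    rfl
  have hD : fderiv ℝ (fun q => ∑ i, curv Γ (cvf (Pi.single i 1)) (cvf v) (cvf v) q i) p v
      = ∑ i, fderiv ℝ (fun q => curv Γ (cvf (Pi.single i 1)) (cvf v) (cvf v) q i) p v :=
    dsum _ (fun i => ((F_contDiff hΓ v i i).differentiable (by simp)).differentiableAt) v
  have hsum : ∑ m, szabo Γ (cvf v) (cvf (Pi.single m 1)) p m
      = (∑ m, fderiv ℝ (fun q => curv Γ (cvf (Pi.single m 1)) (cvf v) (cvf v) q m) p v)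
        + (∑ m, ∑ j, ∑ k,
            Γ p m j k * v j * curv Γ (cvf (Pi.single m 1)) (cvf v) (cvf v) p k)
        - (∑ m, curv Γ (cc Γ v (Pi.single m 1)) (cvf v) (cvf v) p m)
        - (∑ m, curv Γ (cvf (Pi.single m 1)) (cc Γ v v) (cvf v) p m)
        - (∑ m, curv Γ (cvf (Pi.single m 1)) (cvf v) (cc Γ v v) p m) := by
    rw [Finset.sum_congr rfl fun m _ => hszabo m]
    simp only [Finset.sum_sub_distrib, Finset.sum_add_distrib]
  have hstar := star hΓ p v
  have : covRic Γ (cvf v) (cvf v) (cvf v) p = Matrix.trace (szaboMat Γ p v) := by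
    rw [hcovRic, hD, htrace_eq, hsum, ← hstar]
    ring
  rw [this, htr]


end AffineSzabo
end

section
/- The torsion-free affine connection ∇ on ℝ³ with nonzero Christoffel symbols ∇_{∂₁}∂₁ = f₁∂₂, ∇_{∂₂}∂₂ = f₂∂₃, ∇_{∂₃}∂₃ = f₃∂₁ has cyclic parallel Ricci tensor if and only if the functions take the separated form f₁ = f(x₁) + g(x₃), f₂ = h(x₁) + u(x₂), f₃ = v(x₂) + t(x₃) for smooth one-variable functions f, g, h, u, v, t, i.e., if and only if ∂₁∂₂f₁ = ∂₃∂₂f₁ = ∂₁∂₃f₂ = ∂₂∂₃f₂ = ∂₂∂₁f₃ = ∂₃∂₁f₃ = 0 together with ∂₂²f₁ = 2f₁∂₃f₂, ∂₁²f₃ = 2f₃∂₂f₁, ∂₃²f₂ = 2f₂∂₁f₃. -/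
open scoped BigOperators

noncomputable section AffineSzabo

variable {ι : Type} [Fintype ι] [DecidableEq ι]

/-- The connection of Case 2: `∇_{∂₁}∂₁ = f₁∂₂`, `∇_{∂₂}∂₂ = f₂∂₃`, `∇_{∂₃}∂₃ = f₃∂₁`,
all other Christoffel symbols zero. -/
def gammaB (f1 f2 f3 : Pt (Fin 3) → ℝ) : Chr (Fin 3) := fun p i j k =>
  if i = 1 ∧ j = 0 ∧ k = 0 then f1 p
  else if i = 2 ∧ j = 1 ∧ k = 1 then f2 p
  else if i = 0 ∧ j = 2 ∧ k = 2 then f3 p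
  else 0


section Helpers

variable (f1 f2 f3 : Pt (Fin 3) → ℝ)

lemma contDiff_pd {f : Pt (Fin 3) → ℝ} (hf : ContDiff ℝ (⊤ : ℕ∞) f) (j : Fin 3) :
    ContDiff ℝ (⊤ : ℕ∞) (pd j f) :=
  (hf.fderiv_right (by simp)).clm_apply contDiff_const

lemma diff_pd {f : Pt (Fin 3) → ℝ} (hf : ContDiff ℝ (⊤ : ℕ∞) f) (j : Fin 3) (p : Pt (Fin 3)) :
    DifferentiableAt ℝ (pd j f) p :=
  ((contDiff_pd hf j).differentiable (by simp)) p

lemma fderiv_expand {f : Pt (Fin 3) → ℝ} {p : Pt (Fin 3)} (hf : DifferentiableAt ℝ f p)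
    (v : Pt (Fin 3)) :
    fderiv ℝ f p v = v 0 * pd 0 f p + v 1 * pd 1 f p + v 2 * pd 2 f p := by
  have hv : v = v 0 • (Pi.single 0 1 : Pt (Fin 3)) + v 1 • (Pi.single 1 1 : Pt (Fin 3)) + v 2 • (Pi.single 2 1 : Pt (Fin 3)) := by
    funext j; fin_cases j <;> simp [Pi.single_apply]
  calc fderiv ℝ f p v
      = fderiv ℝ f p (v 0 • (Pi.single 0 1 : Pt (Fin 3)) + v 1 • (Pi.single 1 1 : Pt (Fin 3)) + v 2 • (Pi.single 2 1 : Pt (Fin 3))) := by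
        rw [← hv]
    _ = v 0 * pd 0 f p + v 1 * pd 1 f p + v 2 * pd 2 f p := by
        simp [pd, smul_eq_mul]

lemma fderiv_const_dir {f : Pt (Fin 3) → ℝ} (hf : ContDiff ℝ (⊤ : ℕ∞) f) (p v w : Pt (Fin 3)) :
    fderiv ℝ (fun q => fderiv ℝ f q v) p w = fderiv ℝ (fun q => fderiv ℝ f q w) p v := by
  have hd : DifferentiableAt ℝ (fderiv ℝ f) p :=
    ((hf.fderiv_right (m := (⊤ : ℕ∞)) (by simp)).differentiable (by simp)) p
  have key : ∀ u : Pt (Fin 3), fderiv ℝ (fun q => fderiv ℝ f q u) p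
      = (fderiv ℝ (fderiv ℝ f) p).flip u := by
    intro u
    have := fderiv_clm_apply (c := fderiv ℝ f) (u := fun _ => u) hd (differentiableAt_const u)
    simpa using this
  rw [key v, key w]
  simp only [ContinuousLinearMap.flip_apply]
  exact hf.contDiffAt.isSymmSndFDerivAt (x := p) (by rw [minSmoothness_of_isRCLikeNormedField]; exact WithTop.coe_le_coe.mpr le_top) w v

lemma smooth_fderiv_apply {f : Pt (Fin 3) → ℝ} {Z : VF (Fin 3)} (hf : ContDiff ℝ (⊤ : ℕ∞) f)
    (hZ : SmoothVF Z) : ContDiff ℝ (⊤ : ℕ∞) fun q => fderiv ℝ f q (Z q) :=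
  (hf.fderiv_right (by simp)).clm_apply (contDiff_pi.mpr hZ)

lemma fderiv_fderiv_apply {f : Pt (Fin 3) → ℝ} {Z : VF (Fin 3)} (hf : ContDiff ℝ (⊤ : ℕ∞) f)
    (hZ : SmoothVF Z) (p v : Pt (Fin 3)) :
    fderiv ℝ (fun q => fderiv ℝ f q (Z q)) p v
      = fderiv ℝ (fun q => fderiv ℝ f q (Z p)) p v
        + fderiv ℝ f p (fun j => fderiv ℝ (fun q => Z q j) p v) := by
  have hd : DifferentiableAt ℝ (fderiv ℝ f) p :=
    ((hf.fderiv_right (m := (⊤ : ℕ∞)) (by simp)).differentiable (by simp)) p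
  have hZd : DifferentiableAt ℝ (fun q => (Z q : Pt (Fin 3))) p :=
    ((contDiff_pi.mpr hZ).differentiable (by simp)) p
  have h1 := fderiv_clm_apply (c := fderiv ℝ f) (u := fun q => Z q) hd hZd
  have h2 : fderiv ℝ (fun q => fderiv ℝ f q (Z p)) p = (fderiv ℝ (fderiv ℝ f) p).flip (Z p) := by
    have := fderiv_clm_apply (c := fderiv ℝ f) (u := fun _ => Z p) hd (differentiableAt_const _)
    simpa using this
  have h3 : fderiv ℝ (fun q => (Z q : Pt (Fin 3))) p v = fun j => fderiv ℝ (fun q => Z q j) p v := by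
    have := fderiv_pi (𝕜 := ℝ) (φ := fun j q => Z q j) (x := p)
      (fun j => ((hZ j).differentiable (by simp)) p)
    rw [this]; rfl
  calc fderiv ℝ (fun q => fderiv ℝ f q (Z q)) p v
      = ((fderiv ℝ f p).comp (fderiv ℝ (fun q => (Z q : Pt (Fin 3))) p)
          + (fderiv ℝ (fderiv ℝ f) p).flip (Z p)) v := by rw [← h1]
    _ = _ := by
        simp only [ContinuousLinearMap.add_apply, ContinuousLinearMap.comp_apply,
          ContinuousLinearMap.flip_apply, h2, h3]
        ring

lemma fderiv_mul3 {f g h : Pt (Fin 3) → ℝ} {p : Pt (Fin 3)} (hf : DifferentiableAt ℝ f p)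
    (hg : DifferentiableAt ℝ g p) (hh : DifferentiableAt ℝ h p) (v : Pt (Fin 3)) :
    fderiv ℝ (fun q => f q * g q * h q) p v
      = fderiv ℝ f p v * g p * h p + f p * fderiv ℝ g p v * h p + f p * g p * fderiv ℝ h p v := by
  rw [fderiv_fun_mul (c := fun y => f y * g y) (hf.mul hg) hh, fderiv_fun_mul hf hg]
  simp only [ContinuousLinearMap.add_apply, ContinuousLinearMap.smul_apply, smul_eq_mul,
    ContinuousLinearMap.coe_smul', Pi.smul_apply]
  ring

end Helpers


section Conn

variable (f1 f2 f3 : Pt (Fin 3) → ℝ)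

lemma conn_apply0 (X Y : VF (Fin 3)) (p : Pt (Fin 3)) :
    conn (gammaB f1 f2 f3) X Y p 0
      = fderiv ℝ (fun q => Y q 0) p (X p) + f3 p * X p 2 * Y p 2 := by
  simp [conn, gammaB, Fin.sum_univ_three]

lemma conn_apply1 (X Y : VF (Fin 3)) (p : Pt (Fin 3)) :
    conn (gammaB f1 f2 f3) X Y p 1
      = fderiv ℝ (fun q => Y q 1) p (X p) + f1 p * X p 0 * Y p 0 := by
  simp [conn, gammaB, Fin.sum_univ_three]

lemma conn_apply2 (X Y : VF (Fin 3)) (p : Pt (Fin 3)) :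
    conn (gammaB f1 f2 f3) X Y p 2
      = fderiv ℝ (fun q => Y q 2) p (X p) + f2 p * X p 1 * Y p 1 := by
  simp [conn, gammaB, Fin.sum_univ_three]

variable {f1 f2 f3} (h1 : ContDiff ℝ (⊤ : ℕ∞) f1) (h2 : ContDiff ℝ (⊤ : ℕ∞) f2) (h3 : ContDiff ℝ (⊤ : ℕ∞) f3)

include h1 h2 h3 in
lemma smooth_conn {X Y : VF (Fin 3)} (hX : SmoothVF X) (hY : SmoothVF Y) :
    SmoothVF (conn (gammaB f1 f2 f3) X Y) := by
  intro i
  fin_cases i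
  · show ContDiff ℝ (⊤ : ℕ∞) fun p => conn (gammaB f1 f2 f3) X Y p 0
    have : (fun p => conn (gammaB f1 f2 f3) X Y p 0)
        = fun p => fderiv ℝ (fun q => Y q 0) p (X p) + f3 p * X p 2 * Y p 2 := by
      funext p; exact conn_apply0 f1 f2 f3 X Y p
    rw [this]
    exact (smooth_fderiv_apply (hY 0) hX).add ((h3.mul (hX 2)).mul (hY 2))
  · show ContDiff ℝ (⊤ : ℕ∞) fun p => conn (gammaB f1 f2 f3) X Y p 1
    have : (fun p => conn (gammaB f1 f2 f3) X Y p 1)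
        = fun p => fderiv ℝ (fun q => Y q 1) p (X p) + f1 p * X p 0 * Y p 0 := by
      funext p; exact conn_apply1 f1 f2 f3 X Y p
    rw [this]
    exact (smooth_fderiv_apply (hY 1) hX).add ((h1.mul (hX 0)).mul (hY 0))
  · show ContDiff ℝ (⊤ : ℕ∞) fun p => conn (gammaB f1 f2 f3) X Y p 2
    have : (fun p => conn (gammaB f1 f2 f3) X Y p 2)
        = fun p => fderiv ℝ (fun q => Y q 2) p (X p) + f2 p * X p 1 * Y p 1 := by
      funext p; exact conn_apply2 f1 f2 f3 X Y p
    rw [this]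
    exact (smooth_fderiv_apply (hY 2) hX).add ((h2.mul (hX 1)).mul (hY 1))

lemma bracket_cvf_s7 (e : Pt (Fin 3)) (Z : VF (Fin 3)) (p : Pt (Fin 3)) :
    bracket (cvf e) Z p = fun j => fderiv ℝ (fun q => Z q j) p e := by
  funext j; simp [bracket, cvf]

end Conn


section Curv

variable {f1 f2 f3 : Pt (Fin 3) → ℝ}
variable (h1 : ContDiff ℝ (⊤ : ℕ∞) f1) (h2 : ContDiff ℝ (⊤ : ℕ∞) f2) (h3 : ContDiff ℝ (⊤ : ℕ∞) f3)

set_option maxHeartbeats 1000000 in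
include h1 in
lemma curv_diag1 {Z W : VF (Fin 3)} (hZ : SmoothVF Z) (hW : SmoothVF W) (p : Pt (Fin 3)) :
    curv (gammaB f1 f2 f3) (cvf (Pi.single 1 1)) Z W p 1
      = pd 1 f1 p * Z p 0 * W p 0 := by
  set Γ := gammaB f1 f2 f3 with hΓ
  set e : Pt (Fin 3) := Pi.single 1 1 with he
  have he0 : e 0 = 0 := by simp [he, Pi.single_apply]
  have he2 : e 2 = 0 := by simp [he, Pi.single_apply]
  have dW1Z : DifferentiableAt ℝ (fun q => fderiv ℝ (fun q' => W q' 1) q (Z q)) p :=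
    ((smooth_fderiv_apply (hW 1) hZ).differentiable (by simp)) p
  have dB : DifferentiableAt ℝ (fun q => f1 q * Z q 0 * W q 0) p :=
    (((h1.mul (hZ 0)).mul (hW 0)).differentiable (by simp)) p
  have hT1 : conn Γ (cvf e) (conn Γ Z W) p 1
      = (fderiv ℝ (fun q => fderiv ℝ (fun q' => W q' 1) q (Z p)) p e
         + fderiv ℝ (fun q' => W q' 1) p (fun j => fderiv ℝ (fun q => Z q j) p e))
        + (fderiv ℝ f1 p e * Z p 0 * W p 0 + f1 p * fderiv ℝ (fun q => Z q 0) p e * W p 0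
           + f1 p * Z p 0 * fderiv ℝ (fun q => W q 0) p e) := by
    rw [hΓ, conn_apply1]
    have hfun : (fun q => conn Γ Z W q 1)
        = fun q => fderiv ℝ (fun q' => W q' 1) q (Z q) + f1 q * Z q 0 * W q 0 :=
      funext fun q => conn_apply1 f1 f2 f3 Z W q
    rw [← hΓ, hfun, fderiv_fun_add dW1Z dB]
    simp only [ContinuousLinearMap.add_apply, cvf, he0]
    rw [fderiv_fderiv_apply (hW 1) hZ p e,
      fderiv_mul3 (h1.differentiable (by simp) p) ((hZ 0).differentiable (by simp) p)
        ((hW 0).differentiable (by simp) p) e]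
    ring
  have hEW1 : (fun q => conn Γ (cvf e) W q 1) = fun q => fderiv ℝ (fun q' => W q' 1) q e := by
    funext q
    rw [hΓ, conn_apply1]
    simp [cvf, he0]
  have hEW0 : conn Γ (cvf e) W p 0 = fderiv ℝ (fun q' => W q' 0) p e := by
    rw [hΓ, conn_apply0]
    simp [cvf, he2]
  have hT2 : conn Γ Z (conn Γ (cvf e) W) p 1
      = fderiv ℝ (fun q => fderiv ℝ (fun q' => W q' 1) q (Z p)) p e
        + f1 p * Z p 0 * fderiv ℝ (fun q' => W q' 0) p e := by
    rw [hΓ, conn_apply1, ← hΓ, hEW1, hEW0, fderiv_const_dir (hW 1) p e (Z p)]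
  have hT3 : conn Γ (bracket (cvf e) Z) W p 1
      = fderiv ℝ (fun q' => W q' 1) p (fun j => fderiv ℝ (fun q => Z q j) p e)
        + f1 p * fderiv ℝ (fun q => Z q 0) p e * W p 0 := by
    rw [hΓ, conn_apply1]
    simp only [bracket_cvf_s7]
  simp only [curv, Pi.sub_apply, hT1, hT2, hT3, pd, ← he]
  ring

end Curv

section Curv2

variable {f1 f2 f3 : Pt (Fin 3) → ℝ}
variable (h1 : ContDiff ℝ (⊤ : ℕ∞) f1) (h2 : ContDiff ℝ (⊤ : ℕ∞) f2) (h3 : ContDiff ℝ (⊤ : ℕ∞) f3)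

set_option maxHeartbeats 1000000 in
include h3 in
lemma curv_diag0 {Z W : VF (Fin 3)} (hZ : SmoothVF Z) (hW : SmoothVF W) (p : Pt (Fin 3)) :
    curv (gammaB f1 f2 f3) (cvf (Pi.single 0 1)) Z W p 0
      = pd 0 f3 p * Z p 2 * W p 2 := by
  set Γ := gammaB f1 f2 f3 with hΓ
  set e : Pt (Fin 3) := Pi.single 0 1 with he
  have heS : e 2 = 0 := by simp [he, Pi.single_apply]
  have heT : e 1 = 0 := by simp [he, Pi.single_apply]
  have dW1Z : DifferentiableAt ℝ (fun q => fderiv ℝ (fun q' => W q' 0) q (Z q)) p :=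
    ((smooth_fderiv_apply (hW 0) hZ).differentiable (by simp)) p
  have dB : DifferentiableAt ℝ (fun q => f3 q * Z q 2 * W q 2) p :=
    (((h3.mul (hZ 2)).mul (hW 2)).differentiable (by simp)) p
  have hT1 : conn Γ (cvf e) (conn Γ Z W) p 0
      = (fderiv ℝ (fun q => fderiv ℝ (fun q' => W q' 0) q (Z p)) p e
         + fderiv ℝ (fun q' => W q' 0) p (fun j => fderiv ℝ (fun q => Z q j) p e))
        + (fderiv ℝ f3 p e * Z p 2 * W p 2 + f3 p * fderiv ℝ (fun q => Z q 2) p e * W p 2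
           + f3 p * Z p 2 * fderiv ℝ (fun q => W q 2) p e) := by
    rw [hΓ, conn_apply0]
    have hfun : (fun q => conn Γ Z W q 0)
        = fun q => fderiv ℝ (fun q' => W q' 0) q (Z q) + f3 q * Z q 2 * W q 2 :=
      funext fun q => conn_apply0 f1 f2 f3 Z W q
    rw [← hΓ, hfun, fderiv_fun_add dW1Z dB]
    simp only [ContinuousLinearMap.add_apply, cvf, heS]
    rw [fderiv_fderiv_apply (hW 0) hZ p e,
      fderiv_mul3 (h3.differentiable (by simp) p) ((hZ 2).differentiable (by simp) p)
        ((hW 2).differentiable (by simp) p) e]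
    ring
  have hEW1 : (fun q => conn Γ (cvf e) W q 0) = fun q => fderiv ℝ (fun q' => W q' 0) q e := by
    funext q
    rw [hΓ, conn_apply0]
    simp [cvf, heS]
  have hEW0 : conn Γ (cvf e) W p 2 = fderiv ℝ (fun q' => W q' 2) p e := by
    rw [hΓ, conn_apply2]
    simp [cvf, heT]
  have hT2 : conn Γ Z (conn Γ (cvf e) W) p 0
      = fderiv ℝ (fun q => fderiv ℝ (fun q' => W q' 0) q (Z p)) p e
        + f3 p * Z p 2 * fderiv ℝ (fun q' => W q' 2) p e := by
    rw [hΓ, conn_apply0, ← hΓ, hEW1, hEW0, fderiv_const_dir (hW 0) p e (Z p)]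
  have hT3 : conn Γ (bracket (cvf e) Z) W p 0
      = fderiv ℝ (fun q' => W q' 0) p (fun j => fderiv ℝ (fun q => Z q j) p e)
        + f3 p * fderiv ℝ (fun q => Z q 2) p e * W p 2 := by
    rw [hΓ, conn_apply0]
    simp only [bracket_cvf_s7]
  simp only [curv, Pi.sub_apply, hT1, hT2, hT3, pd, ← he]
  ring

set_option maxHeartbeats 1000000 in
include h2 in
lemma curv_diag2 {Z W : VF (Fin 3)} (hZ : SmoothVF Z) (hW : SmoothVF W) (p : Pt (Fin 3)) :
    curv (gammaB f1 f2 f3) (cvf (Pi.single 2 1)) Z W p 2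
      = pd 2 f2 p * Z p 1 * W p 1 := by
  set Γ := gammaB f1 f2 f3 with hΓ
  set e : Pt (Fin 3) := Pi.single 2 1 with he
  have heS : e 1 = 0 := by simp [he, Pi.single_apply]
  have heT : e 0 = 0 := by simp [he, Pi.single_apply]
  have dW1Z : DifferentiableAt ℝ (fun q => fderiv ℝ (fun q' => W q' 2) q (Z q)) p :=
    ((smooth_fderiv_apply (hW 2) hZ).differentiable (by simp)) p
  have dB : DifferentiableAt ℝ (fun q => f2 q * Z q 1 * W q 1) p :=
    (((h2.mul (hZ 1)).mul (hW 1)).differentiable (by simp)) p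
  have hT1 : conn Γ (cvf e) (conn Γ Z W) p 2
      = (fderiv ℝ (fun q => fderiv ℝ (fun q' => W q' 2) q (Z p)) p e
         + fderiv ℝ (fun q' => W q' 2) p (fun j => fderiv ℝ (fun q => Z q j) p e))
        + (fderiv ℝ f2 p e * Z p 1 * W p 1 + f2 p * fderiv ℝ (fun q => Z q 1) p e * W p 1
           + f2 p * Z p 1 * fderiv ℝ (fun q => W q 1) p e) := by
    rw [hΓ, conn_apply2]
    have hfun : (fun q => conn Γ Z W q 2)
        = fun q => fderiv ℝ (fun q' => W q' 2) q (Z q) + f2 q * Z q 1 * W q 1 :=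
      funext fun q => conn_apply2 f1 f2 f3 Z W q
    rw [← hΓ, hfun, fderiv_fun_add dW1Z dB]
    simp only [ContinuousLinearMap.add_apply, cvf, heS]
    rw [fderiv_fderiv_apply (hW 2) hZ p e,
      fderiv_mul3 (h2.differentiable (by simp) p) ((hZ 1).differentiable (by simp) p)
        ((hW 1).differentiable (by simp) p) e]
    ring
  have hEW1 : (fun q => conn Γ (cvf e) W q 2) = fun q => fderiv ℝ (fun q' => W q' 2) q e := by
    funext q
    rw [hΓ, conn_apply2]
    simp [cvf, heS]
  have hEW0 : conn Γ (cvf e) W p 1 = fderiv ℝ (fun q' => W q' 1) p e := by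
    rw [hΓ, conn_apply1]
    simp [cvf, heT]
  have hT2 : conn Γ Z (conn Γ (cvf e) W) p 2
      = fderiv ℝ (fun q => fderiv ℝ (fun q' => W q' 2) q (Z p)) p e
        + f2 p * Z p 1 * fderiv ℝ (fun q' => W q' 1) p e := by
    rw [hΓ, conn_apply2, ← hΓ, hEW1, hEW0, fderiv_const_dir (hW 2) p e (Z p)]
  have hT3 : conn Γ (bracket (cvf e) Z) W p 2
      = fderiv ℝ (fun q' => W q' 2) p (fun j => fderiv ℝ (fun q => Z q j) p e)
        + f2 p * fderiv ℝ (fun q => Z q 1) p e * W p 1 := by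
    rw [hΓ, conn_apply2]
    simp only [bracket_cvf_s7]
  simp only [curv, Pi.sub_apply, hT1, hT2, hT3, pd, ← he]
  ring

end Curv2


section Ricci

variable {f1 f2 f3 : Pt (Fin 3) → ℝ}
variable (h1 : ContDiff ℝ (⊤ : ℕ∞) f1) (h2 : ContDiff ℝ (⊤ : ℕ∞) f2) (h3 : ContDiff ℝ (⊤ : ℕ∞) f3)

include h1 h2 h3 in
lemma ricci_gammaB {Z W : VF (Fin 3)} (hZ : SmoothVF Z) (hW : SmoothVF W) (p : Pt (Fin 3)) :
    ricci (gammaB f1 f2 f3) Z W p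
      = pd 1 f1 p * Z p 0 * W p 0 + pd 2 f2 p * Z p 1 * W p 1 + pd 0 f3 p * Z p 2 * W p 2 := by
  unfold ricci
  rw [Fin.sum_univ_three, curv_diag0 h3 hZ hW p, curv_diag1 h1 hZ hW p, curv_diag2 h2 hZ hW p]
  ring

set_option maxHeartbeats 1000000 in
include h1 h2 h3 in
lemma covRic_gammaB {X : VF (Fin 3)} (hX : SmoothVF X) (p : Pt (Fin 3)) :
    covRic (gammaB f1 f2 f3) X X X p
      = (X p 0 * pd 0 (pd 1 f1) p + X p 1 * pd 1 (pd 1 f1) p + X p 2 * pd 2 (pd 1 f1) p)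
          * (X p 0 * X p 0)
        + (X p 0 * pd 0 (pd 2 f2) p + X p 1 * pd 1 (pd 2 f2) p + X p 2 * pd 2 (pd 2 f2) p)
          * (X p 1 * X p 1)
        + (X p 0 * pd 0 (pd 0 f3) p + X p 1 * pd 1 (pd 0 f3) p + X p 2 * pd 2 (pd 0 f3) p)
          * (X p 2 * X p 2)
        - 2 * pd 1 f1 p * f3 p * X p 0 * (X p 2 * X p 2)
        - 2 * pd 2 f2 p * f1 p * X p 1 * (X p 0 * X p 0)
        - 2 * pd 0 f3 p * f2 p * X p 2 * (X p 1 * X p 1) := by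
  have hXX : SmoothVF (conn (gammaB f1 f2 f3) X X) := smooth_conn h1 h2 h3 hX hX
  have dX : ∀ i : Fin 3, DifferentiableAt ℝ (fun q => X q i) p :=
    fun i => ((hX i).differentiable (by simp)) p
  have dr1 : DifferentiableAt ℝ (pd 1 f1) p := diff_pd h1 1 p
  have dr2 : DifferentiableAt ℝ (pd 2 f2) p := diff_pd h2 2 p
  have dr3 : DifferentiableAt ℝ (pd 0 f3) p := diff_pd h3 0 p
  have dA : DifferentiableAt ℝ (fun q => pd 1 f1 q * X q 0 * X q 0) p :=
    (dr1.mul (dX 0)).mul (dX 0)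
  have dB : DifferentiableAt ℝ (fun q => pd 2 f2 q * X q 1 * X q 1) p :=
    (dr2.mul (dX 1)).mul (dX 1)
  have dC : DifferentiableAt ℝ (fun q => pd 0 f3 q * X q 2 * X q 2) p :=
    (dr3.mul (dX 2)).mul (dX 2)
  have hric : ricci (gammaB f1 f2 f3) X X
      = fun q => pd 1 f1 q * X q 0 * X q 0 + pd 2 f2 q * X q 1 * X q 1
          + pd 0 f3 q * X q 2 * X q 2 :=
    funext fun q => ricci_gammaB h1 h2 h3 hX hX q
  unfold covRic
  rw [ricci_gammaB h1 h2 h3 hXX hX p, ricci_gammaB h1 h2 h3 hX hXX p, hric,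
    fderiv_fun_add (f := fun q => pd 1 f1 q * X q 0 * X q 0 + pd 2 f2 q * X q 1 * X q 1) (dA.add dB) dC, fderiv_fun_add dA dB]
  simp only [ContinuousLinearMap.add_apply]
  rw [fderiv_mul3 dr1 (dX 0) (dX 0) (X p), fderiv_mul3 dr2 (dX 1) (dX 1) (X p),
    fderiv_mul3 dr3 (dX 2) (dX 2) (X p),
    conn_apply0 f1 f2 f3 X X p, conn_apply1 f1 f2 f3 X X p, conn_apply2 f1 f2 f3 X X p,
    fderiv_expand dr1 (X p), fderiv_expand dr2 (X p), fderiv_expand dr3 (X p)]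
  ring

end Ricci


section Main

variable {f1 f2 f3 : Pt (Fin 3) → ℝ}

lemma key_eval (h1 : ContDiff ℝ (⊤ : ℕ∞) f1) (h2 : ContDiff ℝ (⊤ : ℕ∞) f2) (h3 : ContDiff ℝ (⊤ : ℕ∞) f3)
    (h : CyclicParallelRic (gammaB f1 f2 f3)) (p : Pt (Fin 3)) (v : Fin 3 → ℝ) :
    (v 0 * pd 0 (pd 1 f1) p + v 1 * pd 1 (pd 1 f1) p + v 2 * pd 2 (pd 1 f1) p) * (v 0 * v 0)
      + (v 0 * pd 0 (pd 2 f2) p + v 1 * pd 1 (pd 2 f2) p + v 2 * pd 2 (pd 2 f2) p) * (v 1 * v 1)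
      + (v 0 * pd 0 (pd 0 f3) p + v 1 * pd 1 (pd 0 f3) p + v 2 * pd 2 (pd 0 f3) p) * (v 2 * v 2)
      - 2 * pd 1 f1 p * f3 p * v 0 * (v 2 * v 2)
      - 2 * pd 2 f2 p * f1 p * v 1 * (v 0 * v 0)
      - 2 * pd 0 f3 p * f2 p * v 2 * (v 1 * v 1) = 0 := by
  have hv : SmoothVF (cvf v) := fun _ => contDiff_const
  have hh := h (cvf v) hv p
  rw [covRic_gammaB h1 h2 h3 hv p] at hh
  simpa [cvf] using hh

end Main


set_option maxHeartbeats 1000000 in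
/-- The Case 2 connection has cyclic parallel Ricci tensor iff the Christoffel functions satisfy
`∂₁∂₂f₁ = ∂₃∂₂f₁ = ∂₁∂₃f₂ = ∂₂∂₃f₂ = ∂₂∂₁f₃ = ∂₃∂₁f₃ = 0`, together with
`∂₂²f₁ = 2f₁∂₃f₂`, `∂₁²f₃ = 2f₃∂₂f₁`, `∂₃²f₂ = 2f₂∂₁f₃`
(equivalently, `f₁,f₂,f₃` take the separated form of Proposition 3.4). -/
theorem gammaB_cyclicParallel_iff (f1 f2 f3 : Pt (Fin 3) → ℝ)
    (h1 : ContDiff ℝ (⊤ : ℕ∞) f1) (h2 : ContDiff ℝ (⊤ : ℕ∞) f2) (h3 : ContDiff ℝ (⊤ : ℕ∞) f3) :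
    CyclicParallelRic (gammaB f1 f2 f3) ↔
      (∀ p, pd 0 (pd 1 f1) p = 0) ∧ (∀ p, pd 2 (pd 1 f1) p = 0) ∧
      (∀ p, pd 0 (pd 2 f2) p = 0) ∧ (∀ p, pd 1 (pd 2 f2) p = 0) ∧
      (∀ p, pd 1 (pd 0 f3) p = 0) ∧ (∀ p, pd 2 (pd 0 f3) p = 0) ∧
      (∀ p, pd 1 (pd 1 f1) p = 2 * f1 p * pd 2 f2 p) ∧
      (∀ p, pd 0 (pd 0 f3) p = 2 * f3 p * pd 1 f1 p) ∧
      (∀ p, pd 2 (pd 2 f2) p = 2 * f2 p * pd 0 f3 p) := by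
  constructor
  · intro h
    refine ⟨fun p => ?_, fun p => ?_, fun p => ?_, fun p => ?_, fun p => ?_, fun p => ?_,
      fun p => ?_, fun p => ?_, fun p => ?_⟩ <;>
    · have k0 := key_eval h1 h2 h3 h p ![1, 0, 0]
      have k1 := key_eval h1 h2 h3 h p ![0, 1, 0]
      have k2 := key_eval h1 h2 h3 h p ![0, 0, 1]
      have k3 := key_eval h1 h2 h3 h p ![1, 1, 0]
      have k4 := key_eval h1 h2 h3 h p ![1, -1, 0]
      have k5 := key_eval h1 h2 h3 h p ![0, 1, 1]
      have k6 := key_eval h1 h2 h3 h p ![0, 1, -1]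
      have k7 := key_eval h1 h2 h3 h p ![1, 0, 1]
      have k8 := key_eval h1 h2 h3 h p ![1, 0, -1]
      norm_num [Matrix.cons_val_zero, Matrix.cons_val_one, Matrix.head_cons, Matrix.cons_val_two, Matrix.tail_cons] at k0 k1 k2 k3 k4 k5 k6 k7 k8
      linarith [k0, k1, k2, k3, k4, k5, k6, k7, k8]
  · rintro ⟨c1, c2, c3, c4, c5, c6, c7, c8, c9⟩ X hX p
    rw [covRic_gammaB h1 h2 h3 hX p, c1 p, c2 p, c3 p, c4 p, c5 p, c6 p, c7 p, c8 p, c9 p]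
    ring

end AffineSzabo
end

section
/- The torsion-free affine connection on ℝ³ with nonzero Christoffel symbols ∇_{∂₂}∂₂ = x₂∂₃ and ∇_{∂₃}∂₃ = (x₂+x₃²)∂₁ is affine Szabó: for every tangent vector X the Szabó operator S(X) is nilpotent. -/
open scoped BigOperators

noncomputable section AffineSzabo

variable {ι : Type} [Fintype ι] [DecidableEq ι]

theorem fderiv_eval_apply' (i : Fin 3) (p w : Fin 3 → ℝ) :
    fderiv ℝ (fun q : Fin 3 → ℝ => q i) p w = w i := by
  have h : (fun q : Fin 3 → ℝ => q i)
      = (ContinuousLinearMap.proj (R := ℝ) (φ := fun _ : Fin 3 => ℝ) i) := rfl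
  rw [h, ContinuousLinearMap.fderiv]; rfl

theorem diffAt_eval' (i : Fin 3) (p : Fin 3 → ℝ) :
    DifferentiableAt ℝ (fun q : Fin 3 → ℝ => q i) p :=
  (ContinuousLinearMap.proj (R := ℝ) (φ := fun _ : Fin 3 => ℝ) i).differentiableAt

theorem fderiv_eval_sq' (i : Fin 3) (p w : Fin 3 → ℝ) :
    fderiv ℝ (fun q : Fin 3 → ℝ => q i ^ 2) p w = 2 * p i * w i := by
  have h : (fun q : Fin 3 → ℝ => q i ^ 2) = fun q : Fin 3 → ℝ => q i * q i := by
    funext q; ring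
  rw [h, fderiv_fun_mul (diffAt_eval' i p) (diffAt_eval' i p)]
  simp [fderiv_eval_apply']; ring

set_option maxHeartbeats 4000000 in
theorem szaboMat_example44_1 (p v : Fin 3 → ℝ) :
    szaboMat (gammaB (fun _ => 0) (fun p => p 1) (fun p => p 1 + (p 2) ^ 2)) p v
      = !![0,
          -(p 2 ^ 2 * v 1 ^ 2 * v 2) - 3 * p 1 * v 1 ^ 2 * v 2 - 2 * p 1 * p 2 * v 1 * v 2 ^ 2,
          p 2 ^ 2 * v 1 ^ 3 + 3 * p 1 * v 1 ^ 3 + 2 * p 1 * p 2 * v 1 ^ 2 * v 2;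
          0, 0, 0; 0, 0, 0] := by
  ext i m
  fin_cases i <;> fin_cases m <;>
  · simp only [szaboMat, szabo, covCurv, curv, conn, bracket, cvf, gammaB, Matrix.of_apply,
      Pi.sub_apply, Fin.sum_univ_three, Pi.single_apply]
    norm_num
    try simp (disch := fun_prop) [conn, bracket, cvf, gammaB, Fin.sum_univ_three, Pi.single_apply,
      fderiv_fun_mul, fderiv_fun_add, fderiv_const, fderiv_eval_apply', fderiv_eval_sq',
      fderiv_mul_const, fderiv_const_mul, fderiv_fun_sub]
    try ring_nf

/-- The connection `∇_{∂₂}∂₂ = x₂∂₃`, `∇_{∂₃}∂₃ = (x₂+x₃²)∂₁` is affine Szabó. -/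
theorem example44_1_affineSzabo :
    AffineSzabo (gammaB (fun _ => 0) (fun p => p 1) (fun p => p 1 + (p 2) ^ 2)) := by
  intro p v
  refine ⟨2, ?_⟩
  rw [sq, szaboMat_example44_1, Matrix.mul_fin_three]
  norm_num
  ext i m
  fin_cases i <;> fin_cases m <;> rfl

end AffineSzabo
end

section
/- The torsion-free affine connection on ℝ³ with nonzero Christoffel symbols ∇_{∂₁}∂₁ = x₁²∂₂ and ∇_{∂₂}∂₂ = (x₁+x₂)∂₃ is affine Szabó. -/
open scoped BigOperators

noncomputable section AffineSzabo

variable {ι : Type} [Fintype ι] [DecidableEq ι]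

section SzaboAux

@[fun_prop] lemma diff_coord (i : Fin 3) (p : Pt (Fin 3)) :
    DifferentiableAt ℝ (fun q : Pt (Fin 3) => q i) p :=
  (differentiable_pi.mp differentiable_id i) p

@[simp] lemma fd_coord (i : Fin 3) (p u : Pt (Fin 3)) :
    fderiv ℝ (fun q : Pt (Fin 3) => q i) p u = u i := by
  have : (fun q : Pt (Fin 3) => q i)
      = ContinuousLinearMap.proj (R := ℝ) (φ := fun _ : Fin 3 => ℝ) i := rfl
  rw [this, ContinuousLinearMap.fderiv]; rfl

variable {f g : Pt (Fin 3) → ℝ} {p u : Pt (Fin 3)}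

@[simp] lemma fd_add (hf : DifferentiableAt ℝ f p) (hg : DifferentiableAt ℝ g p) :
    fderiv ℝ (fun q => f q + g q) p u = fderiv ℝ f p u + fderiv ℝ g p u := by
  rw [fderiv_fun_add hf hg]; rfl

@[simp] lemma fd_sub (hf : DifferentiableAt ℝ f p) (hg : DifferentiableAt ℝ g p) :
    fderiv ℝ (fun q => f q - g q) p u = fderiv ℝ f p u - fderiv ℝ g p u := by
  rw [fderiv_fun_sub hf hg]; rfl

@[simp] lemma fd_mul (hf : DifferentiableAt ℝ f p) (hg : DifferentiableAt ℝ g p) :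
    fderiv ℝ (fun q => f q * g q) p u = fderiv ℝ f p u * g p + f p * fderiv ℝ g p u := by
  rw [fderiv_fun_mul hf hg]; simp [mul_comm]; ring

@[simp] lemma fd_const (c : ℝ) : fderiv ℝ (fun _ : Pt (Fin 3) => c) p u = 0 := by
  simp

end SzaboAux

set_option maxHeartbeats 1000000 in
lemma szabo_row0 (v w p : Pt (Fin 3)) :
    szabo (gammaB (fun p => (p 0) ^ 2) (fun p => p 0 + p 1) (fun _ => 0)) (cvf v) (cvf w) p 0 = 0 := by
  simp (disch := fun_prop) [szabo, covCurv, curv, conn, bracket, cvf, gammaB, Fin.sum_univ_three, pow_two]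

set_option maxHeartbeats 1000000 in
lemma szabo_row1 (v w p : Pt (Fin 3)) :
    szabo (gammaB (fun p => (p 0) ^ 2) (fun p => p 0 + p 1) (fun _ => 0)) (cvf v) (cvf w) p 1 = 0 := by
  simp (disch := fun_prop) [szabo, covCurv, curv, conn, bracket, cvf, gammaB, Fin.sum_univ_three, pow_two]
  ring

set_option maxHeartbeats 1000000 in
lemma szabo_entry22 (v p : Pt (Fin 3)) :
    szabo (gammaB (fun p => (p 0) ^ 2) (fun p => p 0 + p 1) (fun _ => 0)) (cvf v)
      (cvf (Pi.single (2 : Fin 3) 1)) p 2 = 0 := by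
  simp (disch := fun_prop) [szabo, covCurv, curv, conn, bracket, cvf, gammaB, Fin.sum_univ_three,
    pow_two, Pi.single_apply]

/-- The connection `∇_{∂₁}∂₁ = x₁²∂₂`, `∇_{∂₂}∂₂ = (x₁+x₂)∂₃` is affine Szabó. -/
theorem example44_2_affineSzabo :
    AffineSzabo (gammaB (fun p => (p 0) ^ 2) (fun p => p 0 + p 1) (fun _ => 0)) := by
  intro p v
  refine ⟨2, ?_⟩
  ext i m
  have h0 := szabo_row0 v
  have h1 := szabo_row1 v
  have h2 := szabo_entry22 v
  rw [pow_two]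
  fin_cases i <;>
    simp [Matrix.mul_apply, Fin.sum_univ_three, szaboMat, h0, h1, h2]

end AffineSzabo
end
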